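/- Let f be an optimal integer flow of a network. There exists an optimal integer flow f' with f' ≠ f if and only if the residual graph D_f contains a proper 0-cycle, i.e. a proper directed cycle C with c(f,C) = 0. -/

import Mathlib

open scoped Classical
noncomputable section

/-- A network: finite directed graph with arc set `A`, lower/upper capacities `l`, `u`,
node balances `b` and arc costs `c`. -/
structure Network (V : Type) [Fintype V] [DecidableEq V] where
  A : Finset (V × V)
  l : V × V → ℤ
  u : V × V → ℤ
  b : V → ℤ
  c : V × V → ℝ

variable {V : Type} [Fintype V] [DecidableEq V]

namespace Network

/-- No anti-parallel arcs, and `0 ≤ l ≤ u` on every arc. -/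
def Wellformed (N : Network V) : Prop :=
  (∀ a ∈ N.A, (a.2, a.1) ∉ N.A) ∧ ∀ a ∈ N.A, 0 ≤ N.l a ∧ N.l a ≤ N.u a

/-- A feasible integer flow: capacity constraints, vanishing outside `A`, flow balance. -/
def Feasible (N : Network V) (f : V × V → ℤ) : Prop :=
  (∀ a ∈ N.A, N.l a ≤ f a ∧ f a ≤ N.u a) ∧
  (∀ a, a ∉ N.A → f a = 0) ∧
  ∀ i : V, ((∑ a ∈ N.A.filter fun a => a.1 = i, f a)
         - ∑ a ∈ N.A.filter fun a => a.2 = i, f a) = N.b i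

/-- The cost of a flow. -/
def cost (N : Network V) (f : V × V → ℤ) : ℝ := ∑ a ∈ N.A, N.c a * (f a : ℝ)

/-- A flow is optimal if it is feasible of minimum cost. -/
def Optimal (N : Network V) (f : V × V → ℤ) : Prop :=
  N.Feasible f ∧ ∀ g, N.Feasible g → N.cost f ≤ N.cost g

/-- The arc set `A_f` of the residual graph `D_f`. -/
def resArcs (N : Network V) (f : V × V → ℤ) : Finset (V × V) :=
  N.A.filter (fun a => f a < N.u a) ∪ (N.A.filter fun a => N.l a < f a).image Prod.swap

/-- Residual cost of a residual arc: `c_{ij}` on forward arcs, `-c_{ji}` on backward arcs. -/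
def resCost (N : Network V) (a : V × V) : ℝ :=
  if a ∈ N.A then N.c a else -N.c (a.2, a.1)

/-- Residual capacity of a residual arc. -/
def resCap (N : Network V) (f : V × V → ℤ) (a : V × V) : ℤ :=
  if a ∈ N.A then N.u a - f a else f (a.2, a.1) - N.l (a.2, a.1)

/-- Reduced cost of an arc of `A` w.r.t. node potentials `y`. -/
def redCost (N : Network V) (y : V → ℝ) (a : V × V) : ℝ := N.c a + y a.1 - y a.2

/-- Residual reduced cost of a residual arc w.r.t. node potentials `y`. -/
def resRedCost (N : Network V) (y : V → ℝ) (a : V × V) : ℝ := N.resCost a + y a.1 - y a.2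

/-- `y` is an optimal node potential for `f`. -/
def OptPotential (N : Network V) (f : V × V → ℤ) (y : V → ℝ) : Prop :=
  ∀ a ∈ N.resArcs f, 0 ≤ N.resRedCost y a

end Network

/-- A (simple, directed) cycle: a nonempty duplicate-free list of at least two vertices,
traversed cyclically. -/
structure Cyc (V : Type) where
  verts : List V
  nodup : verts.Nodup
  two_le : 2 ≤ verts.length

/-- The arcs of a cycle: consecutive (cyclic) pairs of vertices. -/
def Cyc.arcs (C : Cyc V) : Finset (V × V) :=
  (C.verts.zip (C.verts.rotate 1)).toFinset

/-- A cycle is proper if it contains no pair of anti-parallel arcs. -/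
def Cyc.Proper (C : Cyc V) : Prop := ∀ a ∈ C.arcs, (a.2, a.1) ∉ C.arcs

/-- The incidence vector `χ(C)` of a cycle. -/
def Cyc.chi (C : Cyc V) : V × V → ℤ :=
  fun a => if a ∈ C.arcs then 1 else if (a.2, a.1) ∈ C.arcs then -1 else 0

namespace Network

/-- `C` is a directed cycle of the residual graph `D_f`. -/
def IsResCycle (N : Network V) (f : V × V → ℤ) (C : Cyc V) : Prop :=
  ∀ a ∈ C.arcs, a ∈ N.resArcs f

/-- The cost `c(f,C)` of a cycle in the residual graph. -/
def cycCost (N : Network V) (C : Cyc V) : ℝ := ∑ a ∈ C.arcs, N.resCost a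

end Network

namespace Network

/-- The incidence vector `χ(C) ∈ {−1,0,1}^A` of a residual cycle, as a vector indexed by
the arcs of the network (zero outside `A`). -/
def chi (N : Network V) (C : Cyc V) : V × V → ℤ :=
  fun a => if a ∈ N.A then C.chi a else 0

end Network

/-!
If `f' ≠ f` is another optimal flow, mark each arc of `A` on which `f < f'` forwards and each arc
on which `f' < f` backwards. These marked arcs are arcs of `D_f`, contain no antiparallel pair,
and, since `f' - f` is a circulation, every marked arc entering a node is followed by a marked arc
leaving it. Following such arcs from any marked arc closes a proper cycle `C` of `D_f`. Both
`f + χ(C)` and `f' - χ(C)` are feasible, so the optimality of `f` and of `f'` gives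
`c(f,C) ≥ 0` and `c(f,C) ≤ 0`. Conversely, pushing one unit of flow around a proper `0`-cycle
yields a different flow of the same cost.
-/

open Function

set_option linter.unusedSectionVars false

theorem Function.exists_iterate_mem_periodicPts {α : Type*} [Finite α] (g : α → α) (x : α) :
    ∃ m, g^[m] x ∈ periodicPts g := by
  obtain ⟨m, n, hmn, heq⟩ := Finite.exists_ne_map_eq_of_infinite fun n => g^[n] x
  wlog hlt : m < n generalizing m n
  · exact this n m hmn.symm heq.symm (hmn.symm.lt_of_le (not_lt.1 hlt))
  refine ⟨m, mk_mem_periodicPts (Nat.sub_pos_of_lt hlt) ?_⟩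
  rw [IsPeriodicPt, IsFixedPt, ← iterate_add_apply, Nat.sub_add_cancel hlt.le]
  exact heq.symm

namespace Cyc

theorem nodup_zip_rotate (C : Cyc V) : (C.verts.zip (C.verts.rotate 1)).Nodup :=
  List.Nodup.of_map Prod.fst (by rw [List.map_fst_zip (by simp)]; exact C.nodup)

theorem sum_arcs_fst_eq_sum_arcs_snd {M : Type*} [AddCommMonoid M] (C : Cyc V) (h : V → M) :
    ∑ e ∈ C.arcs, h e.1 = ∑ e ∈ C.arcs, h e.2 := by
  rw [arcs, List.sum_toFinset _ C.nodup_zip_rotate, List.sum_toFinset _ C.nodup_zip_rotate,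
    show (fun e : V × V => h e.1) = h ∘ Prod.fst from rfl,
    show (fun e : V × V => h e.2) = h ∘ Prod.snd from rfl, ← List.map_map, ← List.map_map,
    List.map_fst_zip (by simp), List.map_snd_zip (by simp)]
  exact ((List.rotate_perm _ 1).map h).sum_eq.symm

def ofPeriodicPt (g : V → V) (y : V) (hy : 2 ≤ minimalPeriod g y) : Cyc V where
  verts := (List.range (minimalPeriod g y)).map (g^[·] y)
  nodup := Cycle.nodup_coe_iff.mp nodup_periodicOrbit
  two_le := by simpa using hy

theorem rotate_verts_ofPeriodicPt (g : V → V) (y : V) (hy : 2 ≤ minimalPeriod g y) :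
    (ofPeriodicPt g y hy).verts.rotate 1 = (ofPeriodicPt g y hy).verts.map g := by
  refine List.ext_getElem (by simp) fun n _ _ => ?_
  simp [ofPeriodicPt, List.getElem_rotate, iterate_mod_minimalPeriod_eq, ← iterate_succ_apply']

theorem exists_eq_of_mem_arcs_ofPeriodicPt {g : V → V} {y : V} {hy : 2 ≤ minimalPeriod g y}
    {e : V × V} (he : e ∈ (ofPeriodicPt g y hy).arcs) : ∃ n, e = (g^[n] y, g (g^[n] y)) := by
  rw [arcs, rotate_verts_ofPeriodicPt, List.mem_toFinset] at he
  rw [show ∀ l : List V, l.zip (l.map g) = l.map fun x => (x, g x) by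
    intro l; simpa using List.zip_map' (f := id) (g := g) (l := l)] at he
  simp only [ofPeriodicPt, List.map_map, List.mem_map, List.mem_range] at he
  obtain ⟨n, -, rfl⟩ := he
  exact ⟨n, rfl⟩

theorem exists_arcs_subset (S : Finset (V × V)) (hS : S.Nonempty) (hloop : ∀ i, (i, i) ∉ S)
    (hsucc : ∀ e ∈ S, ∃ k, (e.2, k) ∈ S) : ∃ C : Cyc V, C.arcs ⊆ S := by
  -- A successor function along `S`; the orbit of a tail of `S` ends in a periodic orbit.
  choose! g hg using fun (i : V) (h : ∃ k, (i, k) ∈ S) => h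
  have hmaps : Set.MapsTo g {i | ∃ k, (i, k) ∈ S} {i | ∃ k, (i, k) ∈ S} :=
    fun i hi => hsucc _ (hg i hi)
  obtain ⟨e, he⟩ := hS
  obtain ⟨m, hm⟩ := exists_iterate_mem_periodicPts g e.1
  set y := g^[m] e.1
  have hyS : ∀ n, (g^[n] y, g (g^[n] y)) ∈ S := fun n => hg _ <| by
    simpa only [y, ← iterate_add_apply, Set.mem_ofPred_eq] using hmaps.iterate (n + m) ⟨e.2, he⟩
  have hy : 2 ≤ minimalPeriod g y := by
    have hpos := minimalPeriod_pos_of_mem_periodicPts hm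
    have hfix : minimalPeriod g y ≠ 1 := fun h1 =>
      hloop y (by simpa [(minimalPeriod_eq_one_iff_isFixedPt.1 h1).eq] using hyS 0)
    omega
  refine ⟨ofPeriodicPt g y hy, fun e he => ?_⟩
  obtain ⟨n, rfl⟩ := exists_eq_of_mem_arcs_ofPeriodicPt he
  exact hyS n

end Cyc

namespace Finset

variable {A : Finset (V × V)} {p q : V × V → Prop} [DecidablePred p] [DecidablePred q] {e : V × V}

theorem mem_filter_union_image_swap :
    e ∈ A.filter p ∪ (A.filter q).image Prod.swap ↔
      e ∈ A ∧ p e ∨ (e.2, e.1) ∈ A ∧ q (e.2, e.1) := by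
  simp only [mem_union, mem_filter, mem_image]
  constructor
  · rintro (he | ⟨a, ha, rfl⟩)
    exacts [.inl he, .inr ha]
  · rintro (he | he)
    exacts [.inl he, .inr ⟨_, he, rfl⟩]

theorem mem_filter_union_image_swap_of_mem (hA : ∀ a ∈ A, (a.2, a.1) ∉ A) (he : e ∈ A) :
    e ∈ A.filter p ∪ (A.filter q).image Prod.swap ↔ p e := by
  rw [mem_filter_union_image_swap]
  simp [he, hA e he]

theorem swap_mem_filter_union_image_swap_of_mem (hA : ∀ a ∈ A, (a.2, a.1) ∉ A) (he : e ∈ A) :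
    (e.2, e.1) ∈ A.filter p ∪ (A.filter q).image Prod.swap ↔ q e := by
  rw [mem_filter_union_image_swap]
  simp [he, hA e he]

end Finset

namespace Network

variable {N : Network V} {C : Cyc V} {f f' : V × V → ℤ}

-- The left-hand side of the balance condition in `Feasible`, so `hf.2.2 i : N.netFlow f i = N.b i`.
def netFlow (N : Network V) (z : V × V → ℤ) (i : V) : ℤ :=
  (∑ a ∈ N.A.filter fun a => a.1 = i, z a) - ∑ a ∈ N.A.filter fun a => a.2 = i, z a

theorem netFlow_add_smul (f z : V × V → ℤ) (ε : ℤ) (i : V) :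
    N.netFlow (f + ε • z) i = N.netFlow f i + ε * N.netFlow z i := by
  simp only [netFlow, Pi.add_apply, Pi.smul_apply, smul_eq_mul, Finset.sum_add_distrib,
    ← Finset.mul_sum]
  ring

theorem netFlow_sub (f f' : V × V → ℤ) (i : V) :
    N.netFlow (f' - f) i = N.netFlow f' i - N.netFlow f i := by
  simp only [netFlow, Pi.sub_apply, Finset.sum_sub_distrib]
  ring

theorem cost_add (f z : V × V → ℤ) : N.cost (f + z) = N.cost f + N.cost z := by
  simp only [cost, Pi.add_apply, Int.cast_add, mul_add, Finset.sum_add_distrib]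

theorem cost_sub (f z : V × V → ℤ) : N.cost (f - z) = N.cost f - N.cost z := by
  simp only [cost, Pi.sub_apply, Int.cast_sub, mul_sub, Finset.sum_sub_distrib]

def IsUndirectedCycle (N : Network V) (C : Cyc V) : Prop :=
  ∀ e ∈ C.arcs, e ∈ N.A ∨ (e.2, e.1) ∈ N.A

theorem IsResCycle.isUndirectedCycle (hC : N.IsResCycle f C) : N.IsUndirectedCycle C :=
  fun e he => (Finset.mem_filter_union_image_swap.1 (hC e he)).imp And.left And.left

theorem chi_cases {a : V × V} (ha : a ∈ N.A) :
    a ∈ C.arcs ∧ N.chi C a = 1 ∨ (a.2, a.1) ∈ C.arcs ∧ N.chi C a = -1 ∨ N.chi C a = 0 := by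
  by_cases h₁ : a ∈ C.arcs
  · simp [chi, Cyc.chi, ha, h₁]
  · by_cases h₂ : (a.2, a.1) ∈ C.arcs <;> simp [chi, Cyc.chi, ha, h₁, h₂]

theorem chi_ne_zero (hCA : N.IsUndirectedCycle C) : N.chi C ≠ 0 := by
  obtain ⟨e, he⟩ : C.arcs.Nonempty := by
    rw [Cyc.arcs, List.toFinset_nonempty_iff, ← List.length_pos_iff]
    simpa using zero_lt_two.trans_le C.two_le
  intro h
  rcases hCA e he with hA | hA
  · simpa [chi, Cyc.chi, hA, he] using congrFun h e
  · by_cases he' : (e.2, e.1) ∈ C.arcs <;>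
      simpa [chi, Cyc.chi, hA, he, he'] using congrFun h (e.2, e.1)

theorem sum_chi_smul (hA : ∀ a ∈ N.A, (a.2, a.1) ∉ N.A) (hC : C.Proper)
    (hCA : N.IsUndirectedCycle C) {M : Type*} [AddCommGroup M] (w : V × V → M) :
    ∑ a ∈ N.A, N.chi C a • w a =
      ∑ e ∈ C.arcs, if e ∈ N.A then w e else -w (e.2, e.1) := by
  have hpt : ∀ a ∈ N.A, N.chi C a • w a =
      (if a ∈ C.arcs then w a else 0) - (if (a.2, a.1) ∈ C.arcs then w a else 0) := by
    intro a ha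
    by_cases h₁ : a ∈ C.arcs
    · simp [chi, Cyc.chi, ha, h₁, hC a h₁]
    · by_cases h₂ : (a.2, a.1) ∈ C.arcs <;> simp [chi, Cyc.chi, ha, h₁, h₂]
  have hback : ∑ a ∈ N.A with (a.2, a.1) ∈ C.arcs, w a =
      ∑ e ∈ C.arcs with e ∉ N.A, w (e.2, e.1) := by
    refine Finset.sum_nbij' Prod.swap Prod.swap ?_ ?_ (by simp) (by simp) (by simp)
    · intro a ha
      simp only [Finset.mem_filter] at ha ⊢
      exact ⟨ha.2, hA a ha.1⟩
    · intro e he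
      simp only [Finset.mem_filter] at he ⊢
      exact ⟨(hCA e he.1).resolve_left he.2, he.1⟩
  rw [Finset.sum_congr rfl hpt, Finset.sum_sub_distrib, ← Finset.sum_filter, ← Finset.sum_filter,
    Finset.sum_ite, Finset.sum_neg_distrib, hback, Finset.filter_mem_eq_inter,
    Finset.filter_mem_eq_inter, Finset.inter_comm, sub_eq_add_neg]

theorem netFlow_chi (hA : ∀ a ∈ N.A, (a.2, a.1) ∉ N.A) (hC : C.Proper)
    (hCA : N.IsUndirectedCycle C) (i : V) : N.netFlow (N.chi C) i = 0 := by
  set δ : V → ℤ := fun v => if v = i then 1 else 0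
  have hsym : ∀ e : V × V,
      (if e ∈ N.A then δ e.1 - δ e.2 else -(δ e.2 - δ e.1)) = δ e.1 - δ e.2 :=
    fun e => by split_ifs <;> ring
  calc N.netFlow (N.chi C) i = ∑ a ∈ N.A, N.chi C a • (δ a.1 - δ a.2) := by
        simp only [netFlow, δ, smul_eq_mul, mul_sub, mul_ite, mul_one, mul_zero,
          Finset.sum_sub_distrib, Finset.sum_filter]
    _ = ∑ e ∈ C.arcs, (δ e.1 - δ e.2) := by
        rw [sum_chi_smul hA hC hCA]
        simp only [hsym]
    _ = 0 := by rw [Finset.sum_sub_distrib, C.sum_arcs_fst_eq_sum_arcs_snd, sub_self]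

theorem cost_chi (hA : ∀ a ∈ N.A, (a.2, a.1) ∉ N.A) (hC : C.Proper)
    (hCA : N.IsUndirectedCycle C) : N.cost (N.chi C) = N.cycCost C := by
  simpa only [cost, cycCost, resCost, zsmul_eq_mul, mul_comm] using sum_chi_smul hA hC hCA N.c

theorem Feasible.add_smul_chi (hA : ∀ a ∈ N.A, (a.2, a.1) ∉ N.A) (hC : C.Proper)
    (hCA : N.IsUndirectedCycle C) (hf : N.Feasible f) (ε : ℤ)
    (hcap : ∀ a ∈ N.A, N.l a ≤ f a + ε * N.chi C a ∧ f a + ε * N.chi C a ≤ N.u a) :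
    N.Feasible (f + ε • N.chi C) := by
  refine ⟨hcap, fun a ha => by simp [hf.2.1 a ha, chi, ha], fun i => ?_⟩
  change N.netFlow _ i = _
  rw [netFlow_add_smul, netFlow_chi hA hC hCA, mul_zero, add_zero]
  exact hf.2.2 i

theorem Feasible.add_chi (hA : ∀ a ∈ N.A, (a.2, a.1) ∉ N.A) (hf : N.Feasible f) (hC : C.Proper)
    (hres : N.IsResCycle f C) : N.Feasible (f + N.chi C) := by
  have hcap : ∀ a ∈ N.A, N.l a ≤ f a + 1 * N.chi C a ∧ f a + 1 * N.chi C a ≤ N.u a := by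
    intro a ha
    have := hf.1 a ha
    rcases chi_cases (C := C) ha with ⟨h, hχ⟩ | ⟨h, hχ⟩ | hχ
    · have := (Finset.mem_filter_union_image_swap_of_mem hA ha).1 (hres a h)
      omega
    · have := (Finset.swap_mem_filter_union_image_swap_of_mem hA ha).1 (hres _ h)
      omega
    · omega
  simpa using hf.add_smul_chi hA hC hres.isUndirectedCycle 1 hcap

def diffArcs (N : Network V) (f f' : V × V → ℤ) : Finset (V × V) :=
  N.A.filter (fun a => f a < f' a) ∪ (N.A.filter fun a => f' a < f a).image Prod.swap

theorem swap_notMem_diffArcs (hA : ∀ a ∈ N.A, (a.2, a.1) ∉ N.A) {e : V × V}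
    (he : e ∈ N.diffArcs f f') : (e.2, e.1) ∉ N.diffArcs f f' := by
  rcases Finset.mem_filter_union_image_swap.1 he with ⟨heA, hlt⟩ | ⟨heA, hlt⟩
  · rw [diffArcs, Finset.swap_mem_filter_union_image_swap_of_mem hA heA]
    omega
  · rw [diffArcs, Finset.mem_filter_union_image_swap_of_mem hA heA]
    omega

theorem diffArcs_nonempty (hf : N.Feasible f) (hf' : N.Feasible f') (hne : f ≠ f') :
    (N.diffArcs f f').Nonempty := by
  obtain ⟨a, ha⟩ := Function.ne_iff.1 hne
  have haA : a ∈ N.A := by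
    by_contra h
    exact ha (by rw [hf.2.1 a h, hf'.2.1 a h])
  rcases ha.lt_or_gt with h | h
  · exact ⟨a, Finset.mem_union_left _ (Finset.mem_filter.2 ⟨haA, h⟩)⟩
  · exact ⟨_, Finset.mem_union_right _ (Finset.mem_image_of_mem _ (Finset.mem_filter.2 ⟨haA, h⟩))⟩

theorem exists_diffArcs_succ (hA : ∀ a ∈ N.A, (a.2, a.1) ∉ N.A) (hf : N.Feasible f)
    (hf' : N.Feasible f') {e : V × V} (he : e ∈ N.diffArcs f f') :
    ∃ k, (e.2, k) ∈ N.diffArcs f f' := by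
  by_contra! hno
  have hout : ∀ a ∈ N.A.filter (fun a => a.1 = e.2), f' a - f a ≤ 0 := by
    intro a ha
    rw [Finset.mem_filter] at ha
    have := hno a.2
    rw [← ha.2, diffArcs, Finset.mem_filter_union_image_swap_of_mem hA ha.1] at this
    omega
  have hin : ∀ a ∈ N.A.filter (fun a => a.2 = e.2), 0 ≤ f' a - f a := by
    intro a ha
    rw [Finset.mem_filter] at ha
    have := hno a.1
    rw [← ha.2, diffArcs, Finset.swap_mem_filter_union_image_swap_of_mem hA ha.1] at this
    omega
  have hbal : N.netFlow (f' - f) e.2 = 0 := by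
    rw [netFlow_sub, sub_eq_zero]
    exact (hf'.2.2 e.2).trans (hf.2.2 e.2).symm
  simp only [netFlow, Pi.sub_apply] at hbal
  rcases Finset.mem_filter_union_image_swap.1 he with ⟨heA, hlt⟩ | ⟨heA, hlt⟩
  · have := Finset.sum_pos' hin ⟨e, Finset.mem_filter.2 ⟨heA, rfl⟩, by omega⟩
    have := Finset.sum_nonpos hout
    omega
  · have := Finset.sum_neg' hout ⟨_, Finset.mem_filter.2 ⟨heA, rfl⟩, by omega⟩
    have := Finset.sum_nonneg hin
    omega

theorem exists_proper_cyc_subset_diffArcs (hA : ∀ a ∈ N.A, (a.2, a.1) ∉ N.A)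
    (hf : N.Feasible f) (hf' : N.Feasible f') (hne : f ≠ f') :
    ∃ C : Cyc V, C.Proper ∧ C.arcs ⊆ N.diffArcs f f' := by
  obtain ⟨C, hCD⟩ := Cyc.exists_arcs_subset _ (diffArcs_nonempty hf hf' hne)
    (fun i hi => swap_notMem_diffArcs hA hi hi) (fun e he => exists_diffArcs_succ hA hf hf' he)
  exact ⟨C, fun e he he' => swap_notMem_diffArcs hA (hCD he) (hCD he'), hCD⟩

theorem diffArcs_subset_resArcs (hf' : N.Feasible f') : N.diffArcs f f' ⊆ N.resArcs f := by
  intro e he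
  rw [resArcs, Finset.mem_filter_union_image_swap]
  rcases Finset.mem_filter_union_image_swap.1 he with ⟨heA, hlt⟩ | ⟨heA, hlt⟩
  · exact .inl ⟨heA, hlt.trans_le (hf'.1 e heA).2⟩
  · exact .inr ⟨heA, (hf'.1 _ heA).1.trans_lt hlt⟩

theorem Feasible.sub_chi_of_subset_diffArcs (hA : ∀ a ∈ N.A, (a.2, a.1) ∉ N.A)
    (hf' : N.Feasible f') (hf : N.Feasible f) (hC : C.Proper)
    (hCD : C.arcs ⊆ N.diffArcs f f') : N.Feasible (f' - N.chi C) := by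
  have hcap : ∀ a ∈ N.A, N.l a ≤ f' a + -1 * N.chi C a ∧ f' a + -1 * N.chi C a ≤ N.u a := by
    intro a ha
    have := hf.1 a ha
    have := hf'.1 a ha
    rcases chi_cases (C := C) ha with ⟨h, hχ⟩ | ⟨h, hχ⟩ | hχ
    · have := (Finset.mem_filter_union_image_swap_of_mem hA ha).1 (hCD h)
      omega
    · have := (Finset.swap_mem_filter_union_image_swap_of_mem hA ha).1 (hCD h)
      omega
    · omega
  have hCA : N.IsUndirectedCycle C :=
    IsResCycle.isUndirectedCycle fun e he => diffArcs_subset_resArcs hf' (hCD he)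
  simpa [sub_eq_add_neg] using hf'.add_smul_chi hA hC hCA (-1) hcap

end Network

/-- An optimal integer flow `f'` different from `f` exists iff the residual graph `D_f`
contains a proper `0`-cycle, i.e. a proper directed cycle `C` with `c(f,C) = 0`. -/
theorem exists_other_optimal_iff_proper_zero_cycle (N : Network V) (hN : N.Wellformed)
    (f : V × V → ℤ) (hf : N.Optimal f) :
    (∃ f' : V × V → ℤ, N.Optimal f' ∧ f' ≠ f) ↔
      ∃ C : Cyc V, N.IsResCycle f C ∧ C.Proper ∧ N.cycCost C = 0 := by
  have hA := hN.1
  constructor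
  · rintro ⟨f', hf', hne⟩
    obtain ⟨C, hC, hCD⟩ := N.exists_proper_cyc_subset_diffArcs hA hf.1 hf'.1 hne.symm
    have hres : N.IsResCycle f C := fun e he => N.diffArcs_subset_resArcs hf'.1 (hCD he)
    have hcost := N.cost_chi hA hC hres.isUndirectedCycle
    have h₁ := hf.2 _ (hf.1.add_chi hA hC hres)
    have h₂ := hf'.2 _ (hf'.1.sub_chi_of_subset_diffArcs hA hf.1 hC hCD)
    rw [Network.cost_add, hcost] at h₁
    rw [Network.cost_sub, hcost] at h₂
    exact ⟨C, hres, hC, by linarith⟩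
  · rintro ⟨C, hres, hC, hzero⟩
    refine ⟨f + N.chi C, ⟨hf.1.add_chi hA hC hres, fun g hg => ?_⟩, ?_⟩
    · rw [Network.cost_add, N.cost_chi hA hC hres.isUndirectedCycle, hzero, add_zero]
      exact hf.2 g hg
    · simpa using Network.chi_ne_zero hres.isUndirectedCycle
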